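/- Let n, M be positive integers with 2M < n, and let F_M″ be the second derivative of the Fejér kernel of order M. For a nonzero integer k, define the k-th Fourier coefficient of the discretized kernel as c_k := (1/(2π)) ∫_0^{2π} e^{−ikt} F_M″(φ_n(t)) dt. If there exists an integer r with 0 < |r| ≤ M and k ≡ r (mod n) (such r is unique since 2M < n), then c_k = −(1 − |r|/(M+1)) r² · (n/(2πik)) · (1 − e^{−2πir/n}); if no such r exists, then c_k = 0. -/

import Mathlib

open Real Filter MeasureTheory intervalIntegral Finset
open scoped Topology BigOperators

/-- The Fejér kernel of order `M`. -/
noncomputable def fejer (M : ℕ) (x : ℝ) : ℝ :=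
  ∑ k ∈ Finset.Icc (-(M : ℤ)) (M : ℤ), (1 - |(k : ℝ)| / ((M : ℝ) + 1)) * Real.cos (k * x)

lemma fejer_hasDerivAt (M : ℕ) (x : ℝ) :
    HasDerivAt (fejer M)
      (∑ l ∈ Finset.Icc (-(M : ℤ)) (M : ℤ),
        -((1 - |(l : ℝ)| / ((M : ℝ) + 1)) * l * Real.sin (l * x))) x := by
  apply HasDerivAt.fun_sum
  intro l _
  have h0 : HasDerivAt (fun t : ℝ => (l:ℝ) * t) (l:ℝ) x := by
    simpa using (hasDerivAt_id x).const_mul (l:ℝ)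
  have h1 := h0.cos
  have := h1.const_mul (1 - |(l : ℝ)| / ((M : ℝ) + 1))
  exact this.congr_deriv (by ring)

lemma fejer_deriv (M : ℕ) : deriv (fejer M) = fun x =>
    ∑ l ∈ Finset.Icc (-(M : ℤ)) (M : ℤ),
        -((1 - |(l : ℝ)| / ((M : ℝ) + 1)) * l * Real.sin (l * x)) := by
  funext x; exact (fejer_hasDerivAt M x).deriv

lemma fejer_deriv2 (M : ℕ) (x : ℝ) : deriv (deriv (fejer M)) x =
    ∑ l ∈ Finset.Icc (-(M : ℤ)) (M : ℤ),
        -((1 - |(l : ℝ)| / ((M : ℝ) + 1)) * l ^ 2 * Real.cos (l * x)) := by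
  rw [fejer_deriv]
  have : HasDerivAt (fun x => ∑ l ∈ Finset.Icc (-(M : ℤ)) (M : ℤ),
        -((1 - |(l : ℝ)| / ((M : ℝ) + 1)) * l * Real.sin (l * x)))
      (∑ l ∈ Finset.Icc (-(M : ℤ)) (M : ℤ),
        -((1 - |(l : ℝ)| / ((M : ℝ) + 1)) * l ^ 2 * Real.cos (l * x))) x := by
    apply HasDerivAt.fun_sum
    intro l _
    have h0 : HasDerivAt (fun t : ℝ => (l:ℝ) * t) (l:ℝ) x := by
      simpa using (hasDerivAt_id x).const_mul (l:ℝ)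
    have h1 := (h0.sin.const_mul ((1 - |(l : ℝ)| / ((M : ℝ) + 1)) * l)).neg
    exact h1.congr_deriv (by ring)
  exact this.deriv

lemma expsum (n : ℕ) (hn : 0 < n) (m : ℤ) :
    ∑ j ∈ Finset.range n, Complex.exp (2 * π * Complex.I * m * j / n) =
      if (n:ℤ) ∣ m then (n:ℂ) else 0 := by
  have hnC : (n:ℂ) ≠ 0 := Nat.cast_ne_zero.mpr hn.ne'
  have hπ : (π:ℂ) ≠ 0 := by exact_mod_cast Real.pi_ne_zero
  have hterm : ∀ j : ℕ, Complex.exp (2 * π * Complex.I * m * j / n)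
      = Complex.exp (2 * π * Complex.I * m / n) ^ j := by
    intro j
    rw [← Complex.exp_nat_mul]
    ring_nf
  simp_rw [hterm]
  by_cases h : (n:ℤ) ∣ m
  · rw [if_pos h]
    obtain ⟨c, hc⟩ := h
    have h1 : Complex.exp (2 * π * Complex.I * m / n) = 1 := by
      rw [show (m:ℂ) = (n:ℂ) * (c:ℂ) by exact_mod_cast congrArg (Int.cast : ℤ → ℂ) hc]
      rw [show 2 * (π:ℂ) * Complex.I * ((n:ℂ) * c) / n = (c:ℂ) * (2 * π * Complex.I) by
        field_simp]
      exact Complex.exp_int_mul_two_pi_mul_I c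
    simp [h1]
  · rw [if_neg h]
    have hz : Complex.exp (2 * π * Complex.I * m / n) ≠ 1 := by
      intro hcon
      rw [Complex.exp_eq_one_iff] at hcon
      obtain ⟨c, hc⟩ := hcon
      apply h
      refine ⟨c, ?_⟩
      have hC : (m : ℂ) = (n : ℂ) * c := by
        have hI : Complex.I ≠ 0 := Complex.I_ne_zero
        field_simp at hc
        have h2 : (2 * (π:ℂ) * Complex.I) * m = (2 * (π:ℂ) * Complex.I) * ((n:ℂ) * c) := by
          linear_combination (2 * (π:ℂ) * Complex.I) * hc
        exact mul_left_cancel₀ (by simp [hπ, hI]) h2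
      exact_mod_cast hC
    rw [geom_sum_eq hz]
    have hzn : Complex.exp (2 * π * Complex.I * m / n) ^ n = 1 := by
      rw [← Complex.exp_nat_mul]
      rw [show (n:ℂ) * (2 * π * Complex.I * m / n) = (m:ℂ) * (2 * π * Complex.I) by
        field_simp]
      exact Complex.exp_int_mul_two_pi_mul_I m
    rw [hzn]
    simp

/-- The discretization map `φ_n(t) = (2π/n)⌊nt/(2π)⌋`. -/
noncomputable def phi (n : ℕ) (t : ℝ) : ℝ :=
  (2 * π / n) * ⌊(n : ℝ) * t / (2 * π)⌋

lemma phi_eq (n : ℕ) (hn : 0 < n) (j : ℕ) (t : ℝ)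
    (h1 : 2 * π * j / n < t) (h2 : t < 2 * π * (j + 1) / n) :
    phi n t = 2 * π * j / n := by
  have hπ : (0:ℝ) < π := Real.pi_pos
  have hnR : (0:ℝ) < n := by exact_mod_cast hn
  have h1' : 2 * π * j < t * n := by rwa [div_lt_iff₀ hnR] at h1
  have h2' : t * n < 2 * π * (j + 1) := by rwa [lt_div_iff₀ hnR] at h2
  have hfl : ⌊(n : ℝ) * t / (2 * π)⌋ = (j : ℤ) := by
    rw [Int.floor_eq_iff]
    constructor
    · push_cast
      rw [le_div_iff₀ (by positivity)]
      nlinarith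
    · push_cast
      rw [div_lt_iff₀ (by positivity)]
      nlinarith
  rw [phi, hfl]
  push_cast
  field_simp

lemma ab_lt (n : ℕ) (hn : 0 < n) (j : ℕ) : 2*π*j/n < 2*π*(j+1)/n := by
  have hπ : (0:ℝ) < π := Real.pi_pos
  have hnR : (0:ℝ) < n := by exact_mod_cast hn
  rw [div_lt_div_iff₀ hnR hnR]
  nlinarith

lemma step_ae (n : ℕ) (hn : 0 < n) (G : ℝ → ℝ) (k : ℤ) (j : ℕ) :
    ∀ᵐ t ∂(volume : Measure ℝ), t ∈ Set.uIoc (2*π*j/n) (2*π*(j+1)/n) →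
      Complex.exp (-Complex.I * k * t) * ((G (phi n t) : ℝ) : ℂ)
        = Complex.exp (-Complex.I * k * t) * ((G (2*π*j/n) : ℝ) : ℂ) := by
  have hab := ab_lt n hn j
  have hb : ∀ᵐ (t:ℝ) ∂(volume : Measure ℝ), t ≠ 2*π*(j+1)/n := by
    have hs : {t : ℝ | ¬ t ≠ 2*π*(j+1)/n} = {2*π*(j+1)/n} := by ext; simp
    rw [ae_iff, hs]; exact measure_singleton _
  filter_upwards [hb] with t hne ht
  rw [Set.uIoc_of_le hab.le] at ht
  have hIoo : t ∈ Set.Ioo (2*π*j/n) (2*π*(j+1)/n) := ⟨ht.1, lt_of_le_of_ne ht.2 hne⟩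
  rw [phi_eq n hn j t hIoo.1 hIoo.2]

lemma step_integrable (n : ℕ) (hn : 0 < n) (G : ℝ → ℝ) (k : ℤ) (j : ℕ) :
    IntervalIntegrable (fun t => Complex.exp (-Complex.I * k * t) * ((G (phi n t) : ℝ) : ℂ))
      volume (2*π*j/n) (2*π*(j+1)/n) := by
  have hcont : Continuous (fun t : ℝ => Complex.exp (-Complex.I * k * t) * ((G (2*π*j/n) : ℝ) : ℂ)) := by
    exact (Complex.continuous_exp.comp (by continuity)).mul continuous_const
  refine (hcont.intervalIntegrable _ _).congr_ae ?_
  rw [Filter.EventuallyEq, ae_restrict_iff' measurableSet_uIoc]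
  filter_upwards [step_ae n hn G k j] with t h ht
  exact (h ht).symm

lemma piece (n : ℕ) (hn : 0 < n) (G : ℝ → ℝ) (k : ℤ) (hk : k ≠ 0) (j : ℕ) :
    ∫ t in (2*π*j/n)..(2*π*(j+1)/n),
        Complex.exp (-Complex.I * k * t) * ((G (phi n t) : ℝ) : ℂ)
      = ((Complex.exp (-Complex.I*k*(2*π*(j+1)/n)) - Complex.exp (-Complex.I*k*(2*π*j/n)))
          / (-Complex.I*k)) * ((G (2*π*j/n) : ℝ) : ℂ) := by
  rw [intervalIntegral.integral_congr_ae (step_ae n hn G k j)]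
  rw [intervalIntegral.integral_mul_const]
  congr 1
  rw [integral_exp_mul_complex (c := -Complex.I * k) (by simp [Complex.I_ne_zero, hk])]
  norm_cast

lemma innerExpSum (n : ℕ) (hn : 0 < n) (k l : ℤ) (a : ℝ) :
    ∑ j ∈ Finset.range n, Complex.exp (-2*π*Complex.I*k*j/n)
        * ((a : ℂ) * ((Real.cos (l * (2*π*j/n)) : ℝ) : ℂ))
      = (a : ℂ)/2 * ((if (n:ℤ) ∣ (l-k) then (n:ℂ) else 0)
          + (if (n:ℤ) ∣ (-l-k) then (n:ℂ) else 0)) := by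
  have hnC : (n:ℂ) ≠ 0 := Nat.cast_ne_zero.mpr hn.ne'
  have hterm : ∀ j ∈ Finset.range n,
      Complex.exp (-2*π*Complex.I*k*j/n) * ((a : ℂ) * ((Real.cos (l * (2*π*j/n)) : ℝ) : ℂ))
        = (a : ℂ)/2 * (Complex.exp (2*π*Complex.I*((l-k : ℤ) : ℂ)*j/n)
            + Complex.exp (2*π*Complex.I*((-l-k : ℤ) : ℂ)*j/n)) := by
    intro j _
    set z : ℂ := ((l * (2*π*j/n) : ℝ) : ℂ) with hz
    have hcosz : ((Real.cos (l * (2*π*j/n)) : ℝ) : ℂ) = (Complex.exp (z*Complex.I) + Complex.exp (-z*Complex.I))/2 := by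
      rw [Complex.ofReal_cos]
      rw [eq_div_iff (two_ne_zero)]
      have h2 := Complex.two_cos z
      linear_combination h2
    have e1 : Complex.exp (-2*π*Complex.I*k*j/n) * Complex.exp (z*Complex.I)
        = Complex.exp (2*π*Complex.I*((l-k : ℤ) : ℂ)*j/n) := by
      rw [← Complex.exp_add]; congr 1; rw [hz]; push_cast; field_simp; ring
    have e2 : Complex.exp (-2*π*Complex.I*k*j/n) * Complex.exp (-z*Complex.I)
        = Complex.exp (2*π*Complex.I*((-l-k : ℤ) : ℂ)*j/n) := by
      rw [← Complex.exp_add]; congr 1; rw [hz]; push_cast; field_simp; ring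
    calc Complex.exp (-2*π*Complex.I*k*j/n) * ((a : ℂ) * ((Real.cos (l * (2*π*j/n)) : ℝ) : ℂ))
        = (a : ℂ)/2 * (Complex.exp (-2*π*Complex.I*k*j/n) * Complex.exp (z*Complex.I)
            + Complex.exp (-2*π*Complex.I*k*j/n) * Complex.exp (-z*Complex.I)) := by
          rw [hcosz]; ring
      _ = _ := by rw [e1, e2]
  rw [Finset.sum_congr rfl hterm, ← Finset.mul_sum, Finset.sum_add_distrib,
    expsum n hn (l-k), expsum n hn (-l-k)]

lemma sum_exp_G (n M : ℕ) (hn : 0 < n) (k : ℤ) :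
    ∑ j ∈ Finset.range n, Complex.exp (-2*π*Complex.I*k*j/n)
        * ((deriv (deriv (fejer M)) (2*π*(j:ℝ)/n) : ℝ) : ℂ)
      = ∑ l ∈ Finset.Icc (-(M:ℤ)) (M:ℤ),
          (((-((1 - |(l:ℝ)|/((M:ℝ)+1)) * (l:ℝ)^2)) : ℝ) : ℂ)/2
            * ((if (n:ℤ) ∣ (l-k) then (n:ℂ) else 0)
              + (if (n:ℤ) ∣ (-l-k) then (n:ℂ) else 0)) := by
  have h1 : ∀ j ∈ Finset.range n,
      Complex.exp (-2*π*Complex.I*k*j/n) * ((deriv (deriv (fejer M)) (2*π*(j:ℝ)/n) : ℝ) : ℂ)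
        = ∑ l ∈ Finset.Icc (-(M:ℤ)) (M:ℤ),
            Complex.exp (-2*π*Complex.I*k*j/n)
              * ((((-((1 - |(l:ℝ)|/((M:ℝ)+1)) * (l:ℝ)^2)) : ℝ) : ℂ)
                * ((Real.cos (l * (2*π*(j:ℝ)/n)) : ℝ) : ℂ)) := by
    intro j _
    rw [fejer_deriv2]
    push_cast
    rw [Finset.mul_sum]
    refine Finset.sum_congr rfl fun l hl => by ring
  rw [Finset.sum_congr rfl h1, Finset.sum_comm]
  exact Finset.sum_congr rfl fun l _ => innerExpSum n hn k l _

/-- The `k`-th Fourier coefficient of the discretized second derivative of the Fejér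
kernel: `c_k = (1/(2π)) ∫_0^{2π} e^{−ikt} F_M″(φ_n(t)) dt`. -/
noncomputable def ck (n M : ℕ) (k : ℤ) : ℂ :=
  (1 / (2 * (π : ℂ))) * ∫ t in (0 : ℝ)..(2 * π),
    Complex.exp (-Complex.I * (k : ℂ) * (t : ℂ)) * ((deriv (deriv (fejer M)) (phi n t) : ℝ) : ℂ)

lemma ck_eq (n M : ℕ) (hn : 0 < n) (k : ℤ) (hk : k ≠ 0) :
    ck n M k = (1/(2*(π:ℂ))) * ((Complex.exp (-2*π*Complex.I*k/n) - 1)/(-Complex.I*k))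
      * ∑ l ∈ Finset.Icc (-(M:ℤ)) (M:ℤ),
          (((-((1 - |(l:ℝ)|/((M:ℝ)+1)) * (l:ℝ)^2)) : ℝ) : ℂ)/2
            * ((if (n:ℤ) ∣ (l-k) then (n:ℂ) else 0)
              + (if (n:ℤ) ∣ (-l-k) then (n:ℂ) else 0)) := by
  have hnC : (n:ℂ) ≠ 0 := Nat.cast_ne_zero.mpr hn.ne'
  have hnR : ((n:ℝ)) ≠ 0 := Nat.cast_ne_zero.mpr hn.ne'
  set G : ℝ → ℝ := deriv (deriv (fejer M)) with hG
  set f : ℝ → ℂ := fun t => Complex.exp (-Complex.I * k * t) * ((G (phi n t) : ℝ) : ℂ) with hf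
  have hint : ∀ j, j < n → IntervalIntegrable f volume (2*π*(j:ℝ)/n) (2*π*((j:ℕ)+1:ℕ)/n) := by
    intro j _
    have := step_integrable n hn G k j
    rw [hf]
    convert this using 2
    push_cast
    ring
  have hsplit : (∫ t in (0:ℝ)..(2*π), f t)
      = ∑ j ∈ Finset.range n, ∫ t in (2*π*(j:ℝ)/n)..(2*π*((j:ℝ)+1)/n), f t := by
    calc ∫ t in (0:ℝ)..(2*π), f t
        = ∫ t in (2*π*((0:ℕ):ℝ)/n)..(2*π*((n:ℕ):ℝ)/n), f t := by
          rw [show 2*π*((0:ℕ):ℝ)/n = 0 by simp, show 2*π*((n:ℕ):ℝ)/n = 2*π by field_simp]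
      _ = ∑ j ∈ Finset.range n, ∫ t in (2*π*(j:ℝ)/n)..(2*π*(((j+1:ℕ)):ℝ)/n), f t :=
          (intervalIntegral.sum_integral_adjacent_intervals
            (a := fun j : ℕ => 2*π*(j:ℝ)/n) (μ := volume) (f := f) hint).symm
      _ = _ := by
          refine Finset.sum_congr rfl fun j _ => ?_
          congr 2
          push_cast
          ring
  have hck : ck n M k = (1/(2*(π:ℂ))) * ∫ t in (0:ℝ)..(2*π), f t := rfl
  have hpiece : ∀ j ∈ Finset.range n, (∫ t in (2*π*(j:ℝ)/n)..(2*π*((j:ℝ)+1)/n), f t)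
      = ((Complex.exp (-2*π*Complex.I*k/n) - 1)/(-Complex.I*k))
          * (Complex.exp (-2*π*Complex.I*k*j/n) * ((G (2*π*(j:ℝ)/n) : ℝ) : ℂ)) := by
    intro j _
    rw [hf]
    rw [piece n hn G k hk j]
    have e3 : Complex.exp (-Complex.I*(k:ℂ)*(2*(π:ℂ)*((j:ℂ)+1)/(n:ℂ)))
        = Complex.exp (-2*π*Complex.I*k/n) * Complex.exp (-2*π*Complex.I*k*j/n) := by
      rw [← Complex.exp_add]; congr 1; field_simp; ring
    have e4 : Complex.exp (-Complex.I*(k:ℂ)*(2*(π:ℂ)*(j:ℂ)/(n:ℂ)))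
        = Complex.exp (-2*π*Complex.I*k*j/n) := by
      congr 1; ring
    rw [e3, e4]
    ring
  rw [hck, hsplit, Finset.sum_congr rfl hpiece, ← Finset.mul_sum, sum_exp_G n M hn k]
  ring

lemma dvd_sub_iff (n M : ℕ) (hn2 : 2*M < n) (k l r : ℤ) (hl : |l| ≤ (M:ℤ)) (hr : |r| ≤ (M:ℤ))
    (hd : (n:ℤ) ∣ (k - r)) : (n:ℤ) ∣ (l - k) ↔ l = r := by
  have hn2' : (2*M : ℤ) < n := by exact_mod_cast hn2
  constructor
  · intro h
    have h2 : (n:ℤ) ∣ (l - r) := by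
      have := dvd_add h hd
      simpa using this
    have habs : |l - r| < (n:ℤ) := by
      have := abs_sub l r
      linarith
    have := Int.eq_zero_of_abs_lt_dvd h2 habs
    omega
  · rintro rfl
    simpa using (dvd_neg.mpr hd)

/-- Aliasing formula for the Fourier coefficients of the discretized `F_M″`:
if `k ≡ r (mod n)` with `0 < |r| ≤ M`, then
`c_k = −(1 − |r|/(M+1)) r² (n/(2πik)) (1 − e^{−2πir/n})`; otherwise `c_k = 0`. -/
theorem ck_fejer_deriv2_discretized (n M : ℕ) (hM : 0 < M) (hn : 2 * M < n)
    (k : ℤ) (hk : k ≠ 0) :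
    (∀ r : ℤ, r ≠ 0 → |r| ≤ (M : ℤ) → (n : ℤ) ∣ (k - r) →
      ck n M k = -((1 - ((|r| : ℤ) : ℂ) / ((M : ℂ) + 1)) * (r : ℂ) ^ 2)
          * ((n : ℂ) / (2 * (π : ℂ) * Complex.I * (k : ℂ)))
          * (1 - Complex.exp (-2 * (π : ℂ) * Complex.I * (r : ℂ) / (n : ℂ)))) ∧
    ((¬ ∃ r : ℤ, r ≠ 0 ∧ |r| ≤ (M : ℤ) ∧ (n : ℤ) ∣ (k - r)) → ck n M k = 0) := by
  have hn0 : 0 < n := by omega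
  have hnC : (n:ℂ) ≠ 0 := Nat.cast_ne_zero.mpr hn0.ne'
  have hπC : (π:ℂ) ≠ 0 := by exact_mod_cast Real.pi_ne_zero
  have hkC : (k:ℂ) ≠ 0 := by exact_mod_cast hk
  have hMC : (M:ℂ) + 1 ≠ 0 := by
    intro h
    have : ((M:ℂ) + 1) = ((M + 1 : ℕ) : ℂ) := by push_cast; ring
    rw [this] at h
    exact Nat.cast_ne_zero.mpr (Nat.succ_ne_zero M) h
  constructor
  · intro r hr0 hrM hrd
    have hrIcc : r ∈ Finset.Icc (-(M:ℤ)) (M:ℤ) := by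
      rw [Finset.mem_Icc]; constructor <;> [linarith [abs_le.mp hrM]; exact (abs_le.mp hrM).2]
    have hrIcc' : -r ∈ Finset.Icc (-(M:ℤ)) (M:ℤ) := by
      rw [Finset.mem_Icc]
      have := abs_le.mp hrM
      omega
    -- compute the sum
    have hS : ∑ l ∈ Finset.Icc (-(M:ℤ)) (M:ℤ),
          (((-((1 - |(l:ℝ)|/((M:ℝ)+1)) * (l:ℝ)^2)) : ℝ) : ℂ)/2
            * ((if (n:ℤ) ∣ (l-k) then (n:ℂ) else 0)
              + (if (n:ℤ) ∣ (-l-k) then (n:ℂ) else 0))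
        = (((-((1 - |(r:ℝ)|/((M:ℝ)+1)) * (r:ℝ)^2)) : ℝ) : ℂ) * n := by
      have hcongr : ∀ l ∈ Finset.Icc (-(M:ℤ)) (M:ℤ),
          (((-((1 - |(l:ℝ)|/((M:ℝ)+1)) * (l:ℝ)^2)) : ℝ) : ℂ)/2
            * ((if (n:ℤ) ∣ (l-k) then (n:ℂ) else 0)
              + (if (n:ℤ) ∣ (-l-k) then (n:ℂ) else 0))
          = (if l = r then (((-((1 - |(l:ℝ)|/((M:ℝ)+1)) * (l:ℝ)^2)) : ℝ) : ℂ) * n/2 else 0)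
            + (if l = -r then (((-((1 - |(l:ℝ)|/((M:ℝ)+1)) * (l:ℝ)^2)) : ℝ) : ℂ) * n/2 else 0) := by
        intro l hl
        have hlM : |l| ≤ (M:ℤ) := by
          rw [abs_le]; exact Finset.mem_Icc.mp hl
        have hiff1 : ((n:ℤ) ∣ (l-k)) ↔ l = r := dvd_sub_iff n M hn k l r hlM hrM hrd
        have hiff2 : ((n:ℤ) ∣ (-l-k)) ↔ l = -r := by
          rw [show -l-k = -(l - -k) by ring, dvd_neg]
          exact dvd_sub_iff n M hn (-k) l (-r) hlM (by simpa using hrM)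
            (by rw [show -k - -r = -(k - r) by ring]; exact dvd_neg.mpr hrd)
        rw [if_congr hiff1 rfl rfl, if_congr hiff2 rfl rfl]
        split_ifs <;> ring
      rw [Finset.sum_congr rfl hcongr, Finset.sum_add_distrib,
        Finset.sum_ite_eq' _ r, Finset.sum_ite_eq' _ (-r), if_pos hrIcc, if_pos hrIcc']
      push_cast
      rw [abs_neg]
      ring
    have hq : Complex.exp (-2*π*Complex.I*k/n) = Complex.exp (-2*π*Complex.I*r/n) := by
      obtain ⟨c, hc⟩ := hrd
      have hkr : (k:ℂ) = r + n*c := by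
        have : k = r + n*c := by linarith
        exact_mod_cast this
      rw [hkr, show -2*(π:ℂ)*Complex.I*((r:ℂ)+(n:ℂ)*(c:ℂ))/(n:ℂ)
          = -2*π*Complex.I*r/n + ((-c : ℤ) : ℂ)*(2*π*Complex.I) by push_cast; field_simp; ring,
        Complex.exp_add, Complex.exp_int_mul_two_pi_mul_I, mul_one]
    have habs : ((|r| : ℤ) : ℂ) = ((|(r:ℝ)| : ℝ) : ℂ) := by
      rw [← Int.cast_abs]
      norm_cast
    rw [ck_eq n M hn0 k hk, hS, hq, habs]
    have key : ∀ B q : ℂ, (1/(2*(π:ℂ))) * ((q - 1)/(-Complex.I*(k:ℂ))) * (-B * (n:ℂ))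
        = -B * ((n:ℂ)/(2*(π:ℂ)*Complex.I*(k:ℂ))) * (1-q) := by
      intro B q
      field_simp
      ring
    have hA : ((( -((1 - |(r:ℝ)|/((M:ℝ)+1)) * (r:ℝ)^2)) : ℝ) : ℂ)
        = -((1 - ((|(r:ℝ)| : ℝ) : ℂ)/((M:ℂ)+1)) * (r:ℂ)^2) := by
      push_cast
      ring
    rw [hA, key]
  · intro hne
    have hS0 : ∑ l ∈ Finset.Icc (-(M:ℤ)) (M:ℤ),
          (((-((1 - |(l:ℝ)|/((M:ℝ)+1)) * (l:ℝ)^2)) : ℝ) : ℂ)/2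
            * ((if (n:ℤ) ∣ (l-k) then (n:ℂ) else 0)
              + (if (n:ℤ) ∣ (-l-k) then (n:ℂ) else 0)) = 0 := by
      refine Finset.sum_eq_zero fun l hl => ?_
      have hlM : |l| ≤ (M:ℤ) := by rw [abs_le]; exact Finset.mem_Icc.mp hl
      rcases eq_or_ne l 0 with rfl | hl0
      · simp
      · have h1 : ¬ (n:ℤ) ∣ (l-k) := by
          intro hd
          exact hne ⟨l, hl0, hlM, by rw [show k - l = -(l-k) by ring]; exact dvd_neg.mpr hd⟩
        have h2 : ¬ (n:ℤ) ∣ (-l-k) := by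
          intro hd
          exact hne ⟨-l, neg_ne_zero.mpr hl0, by simpa using hlM,
            by rw [show k - -l = -(-l-k) by ring]; exact dvd_neg.mpr hd⟩
        simp [h1, h2]
    rw [ck_eq n M hn0 k hk, hS0, mul_zero]
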